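/- arXiv:1307.5899 — 4 statements merged into one kernel-verified Lean document; each statement's English description precedes it below -/
import Mathlib

section
/- For base b > 1 and integer length ℓ ≥ 1, the sum over k ≥ 1 of the cache-miss probabilities κ(b^k, ℓ), where κ(N, ℓ) = ℓ/N if ℓ ≤ N and 1 otherwise, equals ⌊log_b ℓ⌋ + ℓ · b^{-⌊log_b ℓ⌋} / (b - 1). -/
/-! With `m = ⌊log_b ℓ⌋` the first `m` terms are `1`, because `b ^ (k + 1) ≤ ℓ` there, and the
remaining terms `ℓ / b ^ (k + 1)` form a geometric series with sum `ℓ b⁻ᵐ / (b - 1)`. -/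

theorem hasSum_div_pow_succ {b : ℝ} (hb : 1 < b) (c : ℝ) :
    HasSum (fun k : ℕ => c / b ^ (k + 1)) (c / (b - 1)) := by
  have hb₀ : b ≠ 0 := by positivity
  have hb₁ : b - 1 ≠ 0 := sub_ne_zero.mpr hb.ne'
  have hterm (k : ℕ) : c / b ^ (k + 1) = c * b⁻¹ * b⁻¹ ^ k := by
    rw [pow_succ', inv_pow, div_eq_mul_inv, mul_inv, mul_assoc]
  have hsum : c / (b - 1) = c * b⁻¹ * (1 - b⁻¹)⁻¹ := by
    field_simp
  simpa only [hterm, hsum] using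
    (hasSum_geometric_of_lt_one (by positivity) (inv_lt_one_of_one_lt₀ hb)).mul_left (c * b⁻¹)

theorem hasSum_min_div_pow_succ_one {b ℓ : ℝ} {m : ℕ} (hb : 1 < b)
    (hle : ∀ k < m, b ^ (k + 1) ≤ ℓ) (hlt : ℓ < b ^ (m + 1)) :
    HasSum (fun k : ℕ => min (ℓ / b ^ (k + 1)) 1) (m + ℓ / b ^ m / (b - 1)) := by
  have hhead : ∑ k ∈ Finset.range m, min (ℓ / b ^ (k + 1)) 1 = m := by
    rw [Finset.sum_congr rfl fun k hk => min_eq_right <|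
      (one_le_div (by positivity)).mpr (hle k (Finset.mem_range.mp hk))]
    simp
  have htail (k : ℕ) : min (ℓ / b ^ (k + m + 1)) 1 = ℓ / b ^ m / b ^ (k + 1) := by
    have hℓ : ℓ ≤ b ^ (k + m + 1) := hlt.le.trans (pow_le_pow_right₀ hb.le (by omega))
    rw [min_eq_left ((div_le_one (by positivity)).mpr hℓ), div_div, ← pow_add]
    ring_nf
  rw [add_comm, ← hhead, ← hasSum_nat_add_iff m]
  simpa only [htail] using hasSum_div_pow_succ hb (ℓ / b ^ m)

theorem sum_cache_miss_prob_general (b ℓ : ℕ) (hb : 2 ≤ b) :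
    ∑' k : ℕ, min ((ℓ : ℝ) / (b : ℝ) ^ (k + 1)) 1
      = (Nat.log b ℓ : ℝ) + (ℓ : ℝ) * ((b : ℝ) ^ (Nat.log b ℓ))⁻¹ / ((b : ℝ) - 1) := by
  have hle : ∀ k < Nat.log b ℓ, (b : ℝ) ^ (k + 1) ≤ ℓ := fun k hk => by
    exact_mod_cast Nat.pow_le_of_le_log (by rintro rfl; simp at hk) hk
  have hlt : (ℓ : ℝ) < (b : ℝ) ^ (Nat.log b ℓ + 1) := by
    exact_mod_cast Nat.lt_pow_succ_log_self hb ℓ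
  rw [(hasSum_min_div_pow_succ_one (by exact_mod_cast hb) hle hlt).tsum_eq, ← div_eq_mul_inv]

/-- For integer base b ≥ 2 and integer length ℓ ≥ 1, with
κ(N, ℓ) = min(ℓ/N, 1), the sum over k ≥ 1 of κ(b^k, ℓ) equals
⌊log_b ℓ⌋ + ℓ · b^{-⌊log_b ℓ⌋} / (b - 1). -/
theorem sum_cache_miss_prob (b ℓ : ℕ) (hb : 2 ≤ b) (hl : 1 ≤ ℓ) :
    ∑' k : ℕ, min ((ℓ : ℝ) / (b : ℝ) ^ (k + 1)) 1
      = (Nat.log b ℓ : ℝ) + (ℓ : ℝ) * ((b : ℝ) ^ (Nat.log b ℓ))⁻¹ / ((b : ℝ) - 1) :=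
  sum_cache_miss_prob_general b ℓ hb
end

section
/- Define sequences C_I and C_P for h ≥ 2 by the recurrences C_I^h = C_P^{h−1} and C_P^h = (1/2)(C_I^{h−1} + C_P^{h−1} + f(h−1)), where f(x) = log₂(2^x + 2^{x−1} − 1), with base cases C_I^1 = C_P^1 = 0 and C_I^2 = C_P^2 = 0. Then for all h ≥ 3, C_P^{h−1} ≤ C_I^{h−1} + (h−2). -/
noncomputable def fWEP (x : ℝ) : ℝ := Real.logb 2 ((2 : ℝ) ^ x + (2 : ℝ) ^ (x - 1) - 1)

/-!
Write `Δₙ = C_P^n - C_I^n`. The recurrences give `Δₙ₊₁ = (f(n) - Δₙ) / 2`, and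
`n - 1 ≤ f(n) ≤ n + 1`, so the invariant `0 ≤ Δₙ ≤ n - 1` propagates from `Δ₂ = 0`.
-/

theorem sub_one_le_fWEP {x : ℝ} (hx : 0 ≤ x) : x - 1 ≤ fWEP x := by
  have h_one_le : (1 : ℝ) ≤ 2 ^ x := Real.one_le_rpow (by norm_num) hx
  have h_pos : (0 : ℝ) < 2 ^ (x - 1) := by positivity
  exact (Real.le_logb_iff_rpow_le (by norm_num) (by linarith)).mpr (by linarith)

theorem fWEP_le_add_one {x : ℝ} (hx : 0 ≤ x) : fWEP x ≤ x + 1 := by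
  have h_one_le : (1 : ℝ) ≤ 2 ^ x := Real.one_le_rpow (by norm_num) hx
  have h_pos : (0 : ℝ) < 2 ^ (x - 1) := by positivity
  have h_half : (2 : ℝ) ^ (x - 1) ≤ 2 ^ x :=
    Real.rpow_le_rpow_of_exponent_le (by norm_num) (by linarith)
  have h_succ : (2 : ℝ) ^ (x + 1) = 2 * 2 ^ x := by
    rw [Real.rpow_add_one (by norm_num), mul_comm]
  exact (Real.logb_le_iff_le_rpow (by norm_num) (by linarith)).mpr (by linarith)

theorem recurrence_gap_bounds (f : ℕ → ℝ) (hf_lower : ∀ n : ℕ, (n : ℝ) - 1 ≤ f n)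
    (hf_upper : ∀ n, f n ≤ n + 1) (CI CP : ℕ → ℝ) (hI2 : CI 2 = 0) (hP2 : CP 2 = 0)
    (hrecI : ∀ n, 2 ≤ n → CI (n + 1) = CP n)
    (hrecP : ∀ n, 2 ≤ n → CP (n + 1) = (1 / 2) * (CI n + CP n + f n)) :
    ∀ n, 2 ≤ n → CI n ≤ CP n ∧ CP n ≤ CI n + ((n : ℝ) - 1) := by
  intro n hn
  induction n, hn using Nat.le_induction with
  | base => simp [hI2, hP2]
  | succ n hn ih =>
    have hn' : (2 : ℝ) ≤ n := by exact_mod_cast hn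
    rw [hrecI n hn, hrecP n hn]
    push_cast
    constructor <;> linarith [ih.1, ih.2, hf_lower n, hf_upper n]

theorem minep_inorder_ineq_general (CI CP : ℕ → ℝ)
    (hI2 : CI 2 = 0) (hP2 : CP 2 = 0)
    (hrecI : ∀ h : ℕ, 3 ≤ h → CI h = CP (h - 1))
    (hrecP : ∀ h : ℕ, 3 ≤ h → CP h = (1 / 2) * (CI (h - 1) + CP (h - 1) + fWEP ((h : ℝ) - 1))) :
    ∀ h : ℕ, 3 ≤ h → CP (h - 1) ≤ CI (h - 1) + ((h : ℝ) - 2) := by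
  have gap := recurrence_gap_bounds (fun n => fWEP n)
    (fun n => sub_one_le_fWEP n.cast_nonneg) (fun n => fWEP_le_add_one n.cast_nonneg)
    CI CP hI2 hP2
    (fun n hn => by simpa using hrecI (n + 1) (by omega))
    (fun n hn => by simpa using hrecP (n + 1) (by omega))
  intro h hh
  obtain ⟨n, rfl⟩ : ∃ n, h = n + 3 := ⟨h - 3, by omega⟩
  have := (gap (n + 2) (by omega)).2
  show CP (n + 2) ≤ CI (n + 2) + (((n + 3 : ℕ) : ℝ) - 2)
  push_cast at this ⊢
  linarith

/-- With C_I and C_P defined by the recurrences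
C_I^h = C_P^{h−1}, C_P^h = ½(C_I^{h−1} + C_P^{h−1} + f(h−1)), base cases
C_I^1 = C_P^1 = C_I^2 = C_P^2 = 0, we have C_P^{h−1} ≤ C_I^{h−1} + (h−2) for all h ≥ 3. -/
theorem minep_inorder_ineq (CI CP : ℕ → ℝ)
    (hI1 : CI 1 = 0) (hP1 : CP 1 = 0) (hI2 : CI 2 = 0) (hP2 : CP 2 = 0)
    (hrecI : ∀ h : ℕ, 3 ≤ h → CI h = CP (h - 1))
    (hrecP : ∀ h : ℕ, 3 ≤ h → CP h = (1 / 2) * (CI (h - 1) + CP (h - 1) + fWEP ((h : ℝ) - 1))) :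
    ∀ h : ℕ, 3 ≤ h → CP (h - 1) ≤ CI (h - 1) + ((h : ℝ) - 2) :=
  minep_inorder_ineq_general CI CP hI2 hP2 hrecI hrecP
end

section
/- If C_P^{h−2} ≤ C_I^{h−2} + (h−3) and C_I^{h−2} + f(h−2) ≤ C_P^{h−2} + (h−2), where C_I^{h−1} = C_P^{h−2} and C_P^{h−1} = (1/2)(C_P^{h−2} + C_I^{h−2} + f(h−2)), then C_P^{h−1} ≤ C_I^{h−1} + (h−2) and C_I^{h−1} + f(h−1) ≤ C_P^{h−1} + (h−1), where f(x) = log₂(2^x + 2^{x−1} − 1). -/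
theorem fWEP_eq (x : ℝ) : fWEP x = Real.logb 2 (3 / 2 * (2 : ℝ) ^ x - 1) := by
  rw [fWEP, Real.rpow_sub_one two_ne_zero]
  ring_nf

theorem two_mul_fWEP_add_one_le {y : ℝ} (hy : 0 ≤ y) :
    2 * fWEP (y + 1) ≤ fWEP y + (y + 3) := by
  set B : ℝ := (2 : ℝ) ^ y
  have hB1 : 1 ≤ B := Real.one_le_rpow one_le_two hy
  have hsucc : (2 : ℝ) ^ (y + 1) = 2 * B := by
    rw [Real.rpow_add_one two_ne_zero, mul_comm]
  have hshift : (2 : ℝ) ^ (y + 3) = 8 * B := by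
    rw [show y + 3 = y + (3 : ℕ) by norm_num, Real.rpow_add_natCast two_ne_zero]
    ring
  calc 2 * fWEP (y + 1) = Real.logb 2 ((3 * B - 1) ^ 2) := by
        rw [fWEP_eq, hsucc, Real.logb_pow]
        ring_nf
    _ ≤ Real.logb 2 ((3 / 2 * B - 1) * (2 : ℝ) ^ (y + 3)) := by
        apply Real.logb_le_logb_of_le one_lt_two (by nlinarith)
        rw [hshift]
        nlinarith [mul_nonneg (by linarith : (0 : ℝ) ≤ 3 * B + 1) (sub_nonneg.2 hB1)]
    _ = fWEP y + (y + 3) := by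
        rw [Real.logb_mul (by linarith) (by positivity),
          Real.logb_rpow two_pos (by norm_num), fWEP_eq]

/-- Inductive step of the MinEP optimality proof.  Writing CP2, CI2 for
C_P^{h−2}, C_I^{h−2} and CP1, CI1 for C_P^{h−1}, C_I^{h−1}: if
C_P^{h−2} ≤ C_I^{h−2} + (h−3) and C_I^{h−2} + f(h−2) ≤ C_P^{h−2} + (h−2), where
C_I^{h−1} = C_P^{h−2} and C_P^{h−1} = ½(C_P^{h−2} + C_I^{h−2} + f(h−2)), then
C_P^{h−1} ≤ C_I^{h−1} + (h−2) and C_I^{h−1} + f(h−1) ≤ C_P^{h−1} + (h−1). -/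
theorem minep_inductive_step (h : ℕ) (hh : 3 ≤ h) (CI1 CP1 CI2 CP2 : ℝ)
    (h1 : CP2 ≤ CI2 + ((h : ℝ) - 3))
    (h2 : CI2 + fWEP ((h : ℝ) - 2) ≤ CP2 + ((h : ℝ) - 2))
    (h3 : CI1 = CP2)
    (h4 : CP1 = (1 / 2) * (CP2 + CI2 + fWEP ((h : ℝ) - 2))) :
    CP1 ≤ CI1 + ((h : ℝ) - 2) ∧ CI1 + fWEP ((h : ℝ) - 1) ≤ CP1 + ((h : ℝ) - 1) := by
  have hh' : (3 : ℝ) ≤ h := by exact_mod_cast hh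
  have key := two_mul_fWEP_add_one_le (y := (h : ℝ) - 2) (by linarith)
  rw [show (h : ℝ) - 2 + 1 = h - 1 by ring] at key
  subst h3 h4
  constructor <;> linarith
end

section
/- For a weighted graph with edge weights w_{ij} and edge lengths ℓ_{ij} induced by a layout, the sum over block sizes b^k (k ≥ 1) of the expected block-transition rates β(b^k) = (1/W) Σ_{ij} w_{ij} min(ℓ_{ij}/b^k, 1) equals (1/W) Σ_{ij} w_{ij} A(ℓ_{ij}), where A(ℓ) = ⌊log_b ℓ⌋ + ℓ b^{−⌊log_b ℓ⌋}/(b−1). -/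
/-!
For a single edge of length `ℓ`, the term `min (ℓ / b ^ (k + 1)) 1` equals `1` exactly when
`b ^ (k + 1) ≤ ℓ`, i.e. for the first `⌊log_b ℓ⌋` values of `k`; from there on it is a geometric
series with ratio `1 / b`, summing to `ℓ b^{-⌊log_b ℓ⌋} / (b - 1)`. The weighted average over the
edges is a finite sum, so it commutes with the series.
-/

lemma hasSum_div_pow_add_succ {b : ℝ} (hb : 1 < b) (x : ℝ) (n : ℕ) :
    HasSum (fun k : ℕ => x / b ^ (k + n + 1)) (x * (b ^ n)⁻¹ / (b - 1)) := by
  have hb0 : b ≠ 0 := by positivity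
  have hb1 : b - 1 ≠ 0 := by linarith
  have hterm (k : ℕ) : x / b ^ (k + n + 1) = x / b ^ (n + 1) * b⁻¹ ^ k := by
    rw [inv_pow]
    field_simp
    ring
  have hvalue : x * (b ^ n)⁻¹ / (b - 1) = x / b ^ (n + 1) * (1 - b⁻¹)⁻¹ := by
    field_simp
    ring
  simp_rw [hterm, hvalue]
  exact (hasSum_geometric_of_lt_one (by positivity) (inv_lt_one_of_one_lt₀ hb)).mul_left _

section

variable {b : ℕ}

lemma min_div_pow_succ_of_lt_log {ℓ k : ℕ} (hk : k < Nat.log b ℓ) :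
    min ((ℓ : ℝ) / (b : ℝ) ^ (k + 1)) 1 = 1 := by
  obtain ⟨-, hb⟩ := Nat.log_pos_iff.1 (k.zero_le.trans_lt hk)
  have hℓ : ℓ ≠ 0 := by rintro rfl; simp at hk
  have hpow : ((b ^ (k + 1) : ℕ) : ℝ) ≤ ℓ := by exact_mod_cast Nat.pow_le_of_le_log hℓ hk
  refine min_eq_right ?_
  rw [le_div_iff₀ (by positivity), one_mul]
  exact_mod_cast hpow

lemma min_div_pow_succ_of_log_le (hb : 1 < b) {ℓ k : ℕ} (hk : Nat.log b ℓ ≤ k) :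
    min ((ℓ : ℝ) / (b : ℝ) ^ (k + 1)) 1 = ℓ / (b : ℝ) ^ (k + 1) := by
  have hlt : ((ℓ : ℕ) : ℝ) < ((b ^ (k + 1) : ℕ) : ℝ) := by
    exact_mod_cast Nat.lt_pow_of_log_lt hb (Nat.lt_succ_of_le hk)
  refine min_eq_left ((div_le_one (by positivity)).2 ?_)
  exact_mod_cast hlt.le

lemma hasSum_min_div_pow_succ_tail (hb : 1 < b) (ℓ : ℕ) :
    HasSum (fun k : ℕ => min ((ℓ : ℝ) / (b : ℝ) ^ (k + Nat.log b ℓ + 1)) 1)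
      (ℓ * ((b : ℝ) ^ Nat.log b ℓ)⁻¹ / ((b : ℝ) - 1)) := by
  simp_rw [min_div_pow_succ_of_log_le hb (Nat.le_add_left _ _)]
  exact hasSum_div_pow_add_succ (by exact_mod_cast hb) _ _

lemma summable_min_div_pow_succ (hb : 1 < b) (ℓ : ℕ) :
    Summable (fun k : ℕ => min ((ℓ : ℝ) / (b : ℝ) ^ (k + 1)) 1) :=
  (summable_nat_add_iff (Nat.log b ℓ)).1 (hasSum_min_div_pow_succ_tail hb ℓ).summable

lemma tsum_min_div_pow_succ (hb : 1 < b) (ℓ : ℕ) :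
    ∑' k : ℕ, min ((ℓ : ℝ) / (b : ℝ) ^ (k + 1)) 1
      = Nat.log b ℓ + ℓ * ((b : ℝ) ^ Nat.log b ℓ)⁻¹ / ((b : ℝ) - 1) := by
  rw [← (summable_min_div_pow_succ hb ℓ).sum_add_tsum_nat_add (Nat.log b ℓ),
    (hasSum_min_div_pow_succ_tail hb ℓ).tsum_eq,
    Finset.sum_congr rfl fun k hk => min_div_pow_succ_of_lt_log (Finset.mem_range.1 hk)]
  simp

end

theorem sum_block_transitions_general {ι : Type*} [Fintype ι] (b : ℕ) (hb : 2 ≤ b)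
    (w : ι → ℝ) (ℓ : ι → ℕ) :
    ∑' k : ℕ, (1 / ∑ i, w i) * ∑ i, w i * min ((ℓ i : ℝ) / (b : ℝ) ^ (k + 1)) 1
      = (1 / ∑ i, w i) * ∑ i, w i *
          ((Nat.log b (ℓ i) : ℝ)
            + (ℓ i : ℝ) * ((b : ℝ) ^ (Nat.log b (ℓ i)))⁻¹ / ((b : ℝ) - 1)) := by
  rw [tsum_mul_left,
    Summable.tsum_finsetSum fun i _ => (summable_min_div_pow_succ hb (ℓ i)).mul_left (w i)]
  simp_rw [tsum_mul_left, tsum_min_div_pow_succ hb]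

/-- For a weighted graph with edge weights w_i > 0 (total W) and edge
lengths ℓ_i ≥ 1 induced by a layout, the sum over block sizes b^k (k ≥ 1) of the
block-transition rates β(b^k) = (1/W) Σ_i w_i min(ℓ_i/b^k, 1) equals
(1/W) Σ_i w_i A(ℓ_i), where A(ℓ) = ⌊log_b ℓ⌋ + ℓ·b^{−⌊log_b ℓ⌋}/(b−1). -/
theorem sum_block_transitions {ι : Type*} [Fintype ι] (b : ℕ) (hb : 2 ≤ b)
    (w : ι → ℝ) (ℓ : ι → ℕ) (hw : ∀ i, 0 < w i) (hl : ∀ i, 1 ≤ ℓ i) :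
    ∑' k : ℕ, (1 / ∑ i, w i) * ∑ i, w i * min ((ℓ i : ℝ) / (b : ℝ) ^ (k + 1)) 1
      = (1 / ∑ i, w i) * ∑ i, w i *
          ((Nat.log b (ℓ i) : ℝ)
            + (ℓ i : ℝ) * ((b : ℝ) ^ (Nat.log b (ℓ i)))⁻¹ / ((b : ℝ) - 1)) :=
  sum_block_transitions_general b hb w ℓ
end
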